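/- arXiv:2105.11404 — 2 statements merged into one kernel-verified Lean document; each statement's English description precedes it below -/
import Mathlib

section
/- The relation on S_Z defined by v ≤ w iff k_v(p,q) ≤ k_w(p,q) for all integers p,q is a partial order (reflexive, antisymmetric, transitive). -/
/-- The rank function `k_w(p,q) = #{a ≤ p : w(a) > q}`. -/
noncomputable def kfun (w : ℤ → ℤ) (p q : ℤ) : ℕ :=
  {a : ℤ | a ≤ p ∧ q < w a}.ncard

lemma kfun_fin (w : Equiv.Perm ℤ) (hw : {i : ℤ | w i ≠ i}.Finite) (p q : ℤ) :
    {a : ℤ | a ≤ p ∧ q < w a}.Finite := by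
  apply (hw.union (Set.finite_Icc (q+1) p)).subset
  intro a ha
  by_cases h : w a = a
  · right
    simp only [Set.mem_Icc]
    obtain ⟨h1, h2⟩ := ha
    rw [h] at h2
    omega
  · left; exact h

lemma kfun_step (w : Equiv.Perm ℤ) (hw : {i : ℤ | w i ≠ i}.Finite) (p q : ℤ) :
    kfun w p q = kfun w (p-1) q + (if q < w p then 1 else 0) := by
  have hf := kfun_fin w hw (p-1) q
  unfold kfun
  by_cases h : q < w p
  · rw [if_pos h]
    have hs : {a : ℤ | a ≤ p ∧ q < w a} = insert p {a : ℤ | a ≤ p-1 ∧ q < w a} := by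
      ext a
      simp only [Set.mem_setOf_eq, Set.mem_insert_iff]
      constructor
      · rintro ⟨h1, h2⟩
        rcases eq_or_ne a p with rfl | hne
        · exact Or.inl rfl
        · exact Or.inr ⟨by omega, h2⟩
      · rintro (rfl | ⟨h1, h2⟩)
        · exact ⟨le_refl _, h⟩
        · exact ⟨by omega, h2⟩
    rw [hs, Set.ncard_insert_of_notMem (by intro hm; exact absurd hm.1 (by omega)) hf]
  · rw [if_neg h]
    have hs : {a : ℤ | a ≤ p ∧ q < w a} = {a : ℤ | a ≤ p-1 ∧ q < w a} := by
      ext a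
      simp only [Set.mem_setOf_eq]
      constructor
      · rintro ⟨h1, h2⟩
        have : a ≠ p := by rintro rfl; exact h h2
        exact ⟨by omega, h2⟩
      · rintro ⟨h1, h2⟩
        exact ⟨by omega, h2⟩
    rw [hs]; simp

/-- Bruhat order: the relation `v ≤ w iff k_v(p,q) ≤ k_w(p,q) for all p, q`
is a partial order (reflexive, antisymmetric, transitive) on `S_ℤ`. -/
theorem bruhat_partial_order :
    (∀ w : Equiv.Perm ℤ, {i : ℤ | w i ≠ i}.Finite →
      ∀ p q : ℤ, kfun w p q ≤ kfun w p q) ∧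
    (∀ v w : Equiv.Perm ℤ, {i : ℤ | v i ≠ i}.Finite → {i : ℤ | w i ≠ i}.Finite →
      (∀ p q : ℤ, kfun v p q ≤ kfun w p q) →
      (∀ p q : ℤ, kfun w p q ≤ kfun v p q) → v = w) ∧
    (∀ u v w : Equiv.Perm ℤ,
      {i : ℤ | u i ≠ i}.Finite → {i : ℤ | v i ≠ i}.Finite → {i : ℤ | w i ≠ i}.Finite →
      (∀ p q : ℤ, kfun u p q ≤ kfun v p q) →
      (∀ p q : ℤ, kfun v p q ≤ kfun w p q) →
      ∀ p q : ℤ, kfun u p q ≤ kfun w p q) := by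
  refine ⟨fun w _ p q => le_refl _, ?_, fun u v w _ _ _ h1 h2 p q => (h1 p q).trans (h2 p q)⟩
  intro v w hv hw h1 h2
  have heq : ∀ p q : ℤ, kfun v p q = kfun w p q := fun p q => le_antisymm (h1 p q) (h2 p q)
  have key : ∀ a q : ℤ, (q < v a ↔ q < w a) := by
    intro a q
    have e1 := kfun_step v hv a q
    have e2 := kfun_step w hw a q
    rw [heq a q, heq (a-1) q] at e1
    rw [e2] at e1
    by_cases hva : q < v a <;> by_cases hwa : q < w a <;>
      simp [hva, hwa] at e1 ⊢
  ext a
  have h3 := (key a (w a - 1)).mpr (by omega)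
  have h4 := (key a (v a - 1)).mp (by omega)
  omega
end

section
/- For a partition λ with r nonzero parts and parameters a = (a_0, a_1, a_2, ...) with a_0 = 0, the double monomial symmetric function m_λ(ξ|a), defined as the symmetrization over distinct permutations of the product ∏_{i=1}^r (ξ_i + a_0)⋯(ξ_i + a_{λ_i - 1}), satisfies the expansion m_λ(ξ|a) = Σ_{(1^r) ⊆ α ⊆ λ} (n_λ / n_α) e_{λ/α}(a) m_α(ξ), where for a sequence α = (α_1,...,α_r) with 1 ≤ α_i ≤ λ_i, n_α = r!/(∏_i m_i(α)!) with m_i(α) the multiplicity of i in α, e_{λ/α}(a) = ∏_i e_{λ_i − α_i}(a_1,...,a_{λ_i − 1}), and m_α(ξ) is the monomial symmetric function of the sorted sequence α. In particular, every coefficient (n_λ/n_α)·e_{λ/α}(a) appearing in the sum, after collecting terms over permutations of α, is a polynomial with integer coefficients. -/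
open MvPolynomial

/-- `ℚ[a_1, a_2, …]`: the variable `X t` is `a_{t+1}`. -/
abbrev ARing : Type := MvPolynomial ℕ ℚ

/-- The parameters `a_t`, with `a_0 = 0`. -/
noncomputable def aval (t : ℕ) : ARing :=
  if t = 0 then 0 else MvPolynomial.X (t - 1)

/-- The monomial symmetric polynomial `m_α(ξ)` in `ξ_1, …, ξ_r`: the sum of `ξ^β` over
the distinct rearrangements `β` of `α`. -/
noncomputable def msym {r : ℕ} (α : Fin r → ℕ) : MvPolynomial (Fin r) ARing :=
  ∑ β ∈ Finset.image (fun σ : Equiv.Perm (Fin r) => α ∘ σ) Finset.univ,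
    ∏ i, MvPolynomial.X i ^ β i

/-- The double monomial symmetric polynomial `m_λ(ξ|a)`: the symmetrization (sum over
distinct terms) of `∏_i (ξ_i + a_0)⋯(ξ_i + a_{λ_i - 1})`. -/
noncomputable def dmsym {r : ℕ} (l : Fin r → ℕ) : MvPolynomial (Fin r) ARing :=
  (Finset.image
    (fun σ : Equiv.Perm (Fin r) =>
      ∏ i, ∏ t ∈ Finset.range (l i), (MvPolynomial.X (σ i) + MvPolynomial.C (aval t)))
    Finset.univ).sum id

/-- `n_α = r! / ∏_i m_i(α)!`, where `m_i(α)` is the multiplicity of `i` in `α`. -/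
noncomputable def nfac {r : ℕ} (α : Fin r → ℕ) : ℚ :=
  (r.factorial : ℚ) /
    ∏ v ∈ Finset.image α Finset.univ,
      ((Finset.univ.filter fun i => α i = v).card.factorial : ℚ)

/-- The elementary symmetric polynomial `e_k(a_1, …, a_n)`. -/
noncomputable def esymA (k n : ℕ) : ARing :=
  ∑ s ∈ Finset.powersetCard k (Finset.range n), ∏ t ∈ s, MvPolynomial.X t

/-! The terms of `m_λ(ξ|a)` are the factorial monomials `(ξ|a)^c = ∏ᵢ (ξᵢ + a₀)⋯(ξᵢ + a_{cᵢ-1})`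
for the distinct rearrangements `c` of `λ`; distinct rearrangements give distinct terms because
the coefficient of `ξ^c` in `(ξ|a)^c'` vanishes unless `c ≤ c'`. As `a₀ = 0`, Vieta's formula
gives `(x|a)^c = Σ_{1 ≤ m ≤ c} e_{c-m}(a₁, …, a_{c-1}) x^m`. Summing over all permutations
counts every rearrangement of `λ` (of `α`) as often as the stabilizer of `λ` (of `α`) has
elements, and `n_λ / n_α = |Stab α| / |Stab λ|`; this is the expansion. The coefficient
collected on the class of `μ` is then the coefficient of `ξ^μ` in `m_λ(ξ|a)`, which is
integral because `m_λ(ξ|a)` is a sum of products of the integral polynomials `ξᵢ + a_t`. -/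

open Finset

lemma prod_apply_perm_eq {ι β M : Type*} [Fintype ι] [CommMonoid M] (F : β → ι → M)
    (f : ι → β) (σ : Equiv.Perm ι) : ∏ i, F (f i) (σ i) = ∏ i, F ((f ∘ ⇑σ⁻¹) i) i :=
  Fintype.prod_equiv σ _ _ fun i => by simp

section Rearrangement

variable {ι β : Type*} [Fintype ι] [DecidableEq ι] [DecidableEq β]

def stabCard (f : ι → β) : ℕ :=
  Fintype.card {σ : Equiv.Perm ι // f ∘ σ = f}

def rearrangements (f : ι → β) : Finset (ι → β) :=
  univ.image fun σ : Equiv.Perm ι => f ∘ σ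

lemma stabCard_pos (f : ι → β) : 0 < stabCard f :=
  Fintype.card_pos_iff.mpr ⟨⟨1, rfl⟩⟩

lemma card_filter_comp_eq {f g : ι → β} {τ : Equiv.Perm ι} (hτ : f ∘ τ = g) :
    #{σ : Equiv.Perm ι | f ∘ σ = g} = stabCard f := by
  rw [stabCard, Fintype.card_subtype]
  refine card_bij' (fun σ _ => σ * τ⁻¹) (fun σ _ => σ * τ) ?_ ?_ (by simp) (by simp) <;>
    simp only [mem_filter, mem_univ, true_and] <;> intro σ hσ <;> ext i
  · simpa using congrFun (hσ.trans hτ.symm) (τ⁻¹ i)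
  · simpa [← hτ] using congrFun hσ (τ i)

lemma sum_comp_perm {M : Type*} [AddCommMonoid M] (f : ι → β) (F : (ι → β) → M) :
    ∑ σ : Equiv.Perm ι, F (f ∘ σ) = stabCard f • ∑ c ∈ rearrangements f, F c := by
  rw [sum_comp, smul_sum]
  refine sum_congr rfl fun c hc => ?_
  obtain ⟨τ, -, hτ⟩ := mem_image.mp hc
  rw [card_filter_comp_eq hτ]

omit [DecidableEq ι] in
lemma card_fiber_eq_count (f : ι → β) (b : β) :
    Fintype.card {i // f i = b} = Multiset.count b (univ.val.map f) := by
  rw [Fintype.card_subtype, Multiset.count_map, card, filter_val]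
  simp_rw [eq_comm]

lemma mem_rearrangements_iff {f g : ι → β} :
    g ∈ rearrangements f ↔ univ.val.map g = univ.val.map f := by
  simp only [rearrangements, mem_image, mem_univ, true_and]
  constructor
  · rintro ⟨σ, rfl⟩
    rw [← Multiset.map_map, Multiset.map_univ_val_equiv]
  · intro h
    have hcard (b : β) : Fintype.card {i // g i = b} = Fintype.card {i // f i = b} := by
      rw [card_fiber_eq_count, card_fiber_eq_count, h]
    exact ⟨Equiv.ofFiberEquiv fun b => Fintype.equivOfCardEq (hcard b),
      funext (Equiv.ofFiberEquiv_map _)⟩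

end Rearrangement

lemma aval_zero : aval 0 = 0 := if_pos rfl

lemma aval_succ (t : ℕ) : aval (t + 1) = X t := by simp [aval]

lemma aval_mem_range_map (t : ℕ) :
    aval t ∈ (map (Int.castRingHom ℚ) : MvPolynomial ℕ ℤ →+* ARing).range := by
  rcases t with _ | t
  · rw [aval_zero]
    exact zero_mem _
  · exact ⟨X t, by rw [aval_succ, map_X]⟩

section Expansion

variable {A : Type*} [CommSemiring A] [Algebra ARing A]

lemma prod_range_add_X_eq_sum_esymA (y : A) (n : ℕ) :
    ∏ t ∈ range n, (y + algebraMap ARing A (X t)) =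
      ∑ k ∈ range (n + 1), algebraMap ARing A (esymA k n) * y ^ (n - k) := by
  have vieta := congrArg (Polynomial.aeval y)
    (Multiset.prod_X_add_C_eq_sum_esymm ((range n).val.map (X : ℕ → ARing)))
  rw [Multiset.map_map, map_multiset_prod, Multiset.map_map, map_sum, Multiset.card_map,
    card_val, card_range] at vieta
  convert vieta using 2
  · simp [prod_eq_multiset_prod, Function.comp_def, Polynomial.aeval_def]
  · rw [map_mul, map_pow, Polynomial.aeval_X, Polynomial.aeval_C, Finset.esymm_map_val]
    rfl

lemma prod_range_add_aval (y : A) {c : ℕ} (hc : 0 < c) :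
    ∏ t ∈ range c, (y + algebraMap ARing A (aval t)) =
      ∑ m ∈ Icc 1 c, algebraMap ARing A (esymA (c - m) (c - 1)) * y ^ m := by
  obtain ⟨n, rfl⟩ := Nat.exists_eq_add_one_of_ne_zero hc.ne'
  rw [prod_range_succ', aval_zero, map_zero, add_zero]
  simp_rw [aval_succ, prod_range_add_X_eq_sum_esymA, sum_mul]
  refine sum_nbij' (fun k => n + 1 - k) (fun m => n + 1 - m) ?_ ?_ ?_ ?_ ?_ <;>
    intro k hk <;> simp only [mem_range, mem_Icc] at hk ⊢
  all_goals try omega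
  rw [mul_assoc, ← pow_succ, show n + 1 - (n + 1 - k) = k by omega, Nat.add_sub_cancel,
    show n - k + 1 = n + 1 - k by omega]

lemma prod_prod_range_add_aval {ι : Type*} [Fintype ι] [DecidableEq ι] (c : ι → ℕ)
    (hc : ∀ i, 0 < c i) (y : ι → A) :
    ∏ i, ∏ t ∈ range (c i), (y i + algebraMap ARing A (aval t)) =
      ∑ α ∈ Fintype.piFinset (fun i => Icc 1 (c i)),
        algebraMap ARing A (∏ i, esymA (c i - α i) (c i - 1)) * ∏ i, y i ^ α i := by
  simp_rw [fun i => prod_range_add_aval (y i) (hc i), prod_univ_sum, map_prod, prod_mul_distrib]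

end Expansion

lemma coeff_equivFunOnFinite_prod_X_pow {σ R : Type*} [Fintype σ] [CommSemiring R]
    (β c : σ → ℕ) :
    coeff (Finsupp.equivFunOnFinite.symm c) (∏ i, X i ^ β i : MvPolynomial σ R) =
      if β = c then 1 else 0 := by
  have : (∏ i, X i ^ β i : MvPolynomial σ R) = monomial (Finsupp.equivFunOnFinite.symm β) 1 := by
    rw [monomial_eq, C_1, one_mul, Finsupp.prod_fintype _ _ (fun _ => pow_zero _)]
    rfl
  classical
  simp only [this, coeff_monomial, EmbeddingLike.apply_eq_iff_eq]

section DoubleMonomial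

variable {r : ℕ}

lemma nfac_eq (α : Fin r → ℕ) : nfac α = r.factorial / stabCard α := by
  rw [nfac, stabCard, DomMulAct.stabilizer_card']
  push_cast
  simp_rw [Fintype.card_subtype]

lemma nfac_div_nfac (l α : Fin r → ℕ) : nfac l / nfac α = stabCard α / stabCard l := by
  have := (stabCard_pos l).ne'
  have := (stabCard_pos α).ne'
  have := r.factorial_ne_zero
  rw [nfac_eq, nfac_eq]
  field_simp

noncomputable def factorialMonomial (c : Fin r → ℕ) : MvPolynomial (Fin r) ARing :=
  ∏ i, ∏ t ∈ range (c i), (X i + C (aval t))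

lemma factorialMonomial_eq_sum {c : Fin r → ℕ} (hc : ∀ i, 0 < c i) :
    factorialMonomial c = ∑ α ∈ Fintype.piFinset (fun i => Icc 1 (c i)),
      C (∏ i, esymA (c i - α i) (c i - 1)) * ∏ i, X i ^ α i := by
  rw [factorialMonomial]
  simpa only [← MvPolynomial.algebraMap_eq] using prod_prod_range_add_aval c hc X

lemma coeff_factorialMonomial {c : Fin r → ℕ} (hc : ∀ i, 0 < c i) (μ : Fin r → ℕ) :
    coeff (Finsupp.equivFunOnFinite.symm μ) (factorialMonomial c) =
      if μ ∈ Fintype.piFinset (fun i => Icc 1 (c i)) then ∏ i, esymA (c i - μ i) (c i - 1)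
      else 0 := by
  simp_rw [factorialMonomial_eq_sum hc, coeff_sum, coeff_C_mul,
    coeff_equivFunOnFinite_prod_X_pow, mul_ite, mul_one, mul_zero, sum_ite_eq']

lemma eq_of_factorialMonomial_eq {c c' : Fin r → ℕ} (hc : ∀ i, 0 < c i)
    (hc' : ∀ i, 0 < c' i) (hsum : ∑ i, c i = ∑ i, c' i)
    (h : factorialMonomial c = factorialMonomial c') : c = c' := by
  have hcoeff := coeff_factorialMonomial hc' c
  rw [← h, coeff_factorialMonomial hc,
    if_pos (Fintype.mem_piFinset.mpr fun i => mem_Icc.mpr ⟨hc i, le_rfl⟩)] at hcoeff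
  have hmem : c ∈ Fintype.piFinset (fun i => Icc 1 (c' i)) := by
    by_contra hnot
    simp [esymA, hnot] at hcoeff
  have hle : ∀ i ∈ univ, c i ≤ c' i := fun i _ => (mem_Icc.mp (Fintype.mem_piFinset.mp hmem i)).2
  exact funext fun i => (sum_eq_sum_iff_of_le hle).mp hsum i (mem_univ i)

lemma prod_prod_X_perm_add_aval (l : Fin r → ℕ) (σ : Equiv.Perm (Fin r)) :
    ∏ i, ∏ t ∈ range (l i), (X (σ i) + C (aval t)) = factorialMonomial (l ∘ ⇑σ⁻¹) :=
  prod_apply_perm_eq (fun n j => ∏ t ∈ range n, (X j + C (aval t))) l σ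

lemma dmsym_eq_sum_factorialMonomial {l : Fin r → ℕ} (hpos : ∀ i, 0 < l i) :
    dmsym l = ∑ c ∈ rearrangements l, factorialMonomial c := by
  have himage : univ.image (fun σ : Equiv.Perm (Fin r) =>
      ∏ i, ∏ t ∈ range (l i), (X (σ i) + C (aval t))) =
      (rearrangements l).image factorialMonomial := by
    ext p
    simp only [prod_prod_X_perm_add_aval, rearrangements, image_image, mem_image, mem_univ,
      true_and, Function.comp_def]
    exact (inv_surjective.exists (p := fun σ : Equiv.Perm (Fin r) =>
      factorialMonomial (fun i => l (σ i)) = p)).symm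
  rw [dmsym, himage, sum_image]
  · rfl
  simp only [rearrangements, coe_image, coe_univ, Set.image_univ]
  rintro _ ⟨σ, rfl⟩ _ ⟨τ, rfl⟩
  exact eq_of_factorialMonomial_eq (fun i => hpos _) (fun i => hpos _)
    ((Equiv.sum_comp σ l).trans (Equiv.sum_comp τ l).symm)

lemma stabCard_smul_dmsym {l : Fin r → ℕ} (hpos : ∀ i, 0 < l i) :
    stabCard l • dmsym l =
      ∑ σ : Equiv.Perm (Fin r), ∏ i, ∏ t ∈ range (l i), (X (σ i) + C (aval t)) := by
  simp_rw [prod_prod_X_perm_add_aval, dmsym_eq_sum_factorialMonomial hpos, ← sum_comp_perm]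
  exact (Equiv.sum_comp (Equiv.inv _) _).symm

lemma sum_perm_prod_X_pow (α : Fin r → ℕ) :
    ∑ σ : Equiv.Perm (Fin r), ∏ i, (X (σ i) : MvPolynomial (Fin r) ARing) ^ α i =
      stabCard α • msym α := by
  simp_rw [prod_apply_perm_eq (fun n j => (X j : MvPolynomial (Fin r) ARing) ^ n) α]
  rw [show msym α = ∑ β ∈ rearrangements α, ∏ i, X i ^ β i from rfl, ← sum_comp_perm]
  exact Equiv.sum_comp (Equiv.inv (Equiv.Perm (Fin r))) (fun σ => ∏ i, X i ^ (α ∘ ⇑σ) i)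

lemma dmsym_eq_sum_msym {l : Fin r → ℕ} (hpos : ∀ i, 0 < l i) :
    dmsym l = ∑ α ∈ Fintype.piFinset (fun i => Icc 1 (l i)),
      (nfac l / nfac α) • (C (∏ i, esymA (l i - α i) (l i - 1)) * msym α) := by
  have hl : (stabCard l : ℚ) ≠ 0 := Nat.cast_ne_zero.mpr (stabCard_pos l).ne'
  refine smul_right_injective _ hl ?_
  have hexpand (σ : Equiv.Perm (Fin r)) :
      ∏ i, ∏ t ∈ range (l i), (X (σ i) + C (aval t)) =
        ∑ α ∈ Fintype.piFinset (fun i => Icc 1 (l i)), C (∏ i, esymA (l i - α i) (l i - 1)) *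
          ∏ i, (X (σ i) : MvPolynomial (Fin r) ARing) ^ α i := by
    simpa only [← MvPolynomial.algebraMap_eq] using
      prod_prod_range_add_aval l hpos (fun i => X (σ i))
  simp only [smul_sum, smul_smul, nfac_div_nfac, mul_div_cancel₀ _ hl]
  rw [Nat.cast_smul_eq_nsmul, stabCard_smul_dmsym hpos]
  simp_rw [hexpand]
  rw [sum_comm]
  refine sum_congr rfl fun α _ => ?_
  rw [← mul_sum, sum_perm_prod_X_pow, Nat.cast_smul_eq_nsmul, mul_smul_comm]

lemma coeff_msym (α μ : Fin r → ℕ) :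
    coeff (Finsupp.equivFunOnFinite.symm μ) (msym α) =
      if univ.val.map α = univ.val.map μ then 1 else 0 := by
  rw [show msym α = ∑ β ∈ rearrangements α, ∏ i, X i ^ β i from rfl, coeff_sum]
  simp_rw [coeff_equivFunOnFinite_prod_X_pow, sum_ite_eq', mem_rearrangements_iff, eq_comm]

lemma dmsym_mem_range_map (l : Fin r → ℕ) :
    dmsym l ∈ (map (map (Int.castRingHom ℚ)) :
      MvPolynomial (Fin r) (MvPolynomial ℕ ℤ) →+* MvPolynomial (Fin r) ARing).range := by
  refine sum_mem fun p hp => ?_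
  obtain ⟨σ, -, rfl⟩ := mem_image.mp hp
  refine prod_mem fun i _ => prod_mem fun t _ => add_mem ⟨X (σ i), map_X _ _⟩ ?_
  obtain ⟨a, ha⟩ := aval_mem_range_map t
  exact ⟨C a, by rw [map_C, ha]⟩

lemma coeff_dmsym_mem_range (l μ : Fin r → ℕ) :
    coeff (Finsupp.equivFunOnFinite.symm μ) (dmsym l) ∈
      Set.range (map (Int.castRingHom ℚ) : MvPolynomial ℕ ℤ →+* ARing) := by
  obtain ⟨p, hp⟩ := dmsym_mem_range_map l
  exact ⟨coeff _ p, by rw [← hp, coeff_map]⟩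

end DoubleMonomial

theorem double_monomial_expansion_general {r : ℕ} (l : Fin r → ℕ)
    (hpos : ∀ i, 0 < l i) :
    (dmsym l =
      ∑ α ∈ Fintype.piFinset (fun i => Finset.Icc 1 (l i)),
        (nfac l / nfac α) •
          (MvPolynomial.C (∏ i, esymA (l i - α i) (l i - 1)) * msym α)) ∧
    (∀ μ : Fin r → ℕ,
      (∑ α ∈ (Fintype.piFinset (fun i => Finset.Icc 1 (l i))).filter
          (fun α => Finset.univ.val.map α = Finset.univ.val.map μ),
        (nfac l / nfac α) • ∏ i, esymA (l i - α i) (l i - 1))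
        ∈ Set.range (MvPolynomial.map (Int.castRingHom ℚ) : MvPolynomial ℕ ℤ →+* ARing)) := by
  refine ⟨dmsym_eq_sum_msym hpos, fun μ => ?_⟩
  convert coeff_dmsym_mem_range l μ using 1
  rw [dmsym_eq_sum_msym hpos, coeff_sum, sum_filter]
  refine sum_congr rfl fun α _ => ?_
  rw [coeff_smul, coeff_C_mul, coeff_msym, mul_ite, mul_one, mul_zero, smul_ite, smul_zero]

/-- The expansion `m_λ(ξ|a) = Σ_{(1^r) ⊆ α ⊆ λ} (n_λ/n_α) e_{λ/α}(a) m_α(ξ)`, where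
`e_{λ/α}(a) = ∏_i e_{λ_i − α_i}(a_1, …, a_{λ_i − 1})`; moreover, after collecting terms
over the rearrangement class of each `α`, the resulting coefficient is a polynomial with
integer coefficients. -/
theorem double_monomial_expansion {r : ℕ} (l : Fin r → ℕ)
    (hpos : ∀ i, 0 < l i) (hdec : ∀ i j : Fin r, i ≤ j → l j ≤ l i) :
    (dmsym l =
      ∑ α ∈ Fintype.piFinset (fun i => Finset.Icc 1 (l i)),
        (nfac l / nfac α) •
          (MvPolynomial.C (∏ i, esymA (l i - α i) (l i - 1)) * msym α)) ∧
    (∀ μ : Fin r → ℕ,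
      (∑ α ∈ (Fintype.piFinset (fun i => Finset.Icc 1 (l i))).filter
          (fun α => Finset.univ.val.map α = Finset.univ.val.map μ),
        (nfac l / nfac α) • ∏ i, esymA (l i - α i) (l i - 1))
        ∈ Set.range (MvPolynomial.map (Int.castRingHom ℚ) : MvPolynomial ℕ ℤ →+* ARing)) :=
  double_monomial_expansion_general l hpos
end
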